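/- arXiv:2509.23790 — 3 statements merged into one kernel-verified Lean document; each statement's English description precedes it below -/
import Mathlib

section
/- Let d ≥ 3 be an integer. For all t > 0 and ρ > 0, (G_t * R^ρ)(0) = (1/2)·∫_0^∞ ν^{d/2−2} (t + ν + 2ρ)^{-d/2} dν = 1/((d−2)(t+2ρ)). -/
open MeasureTheory Real

/-- The standard `d`-dimensional heat kernel `G_t(x) = (2πt)^{-d/2} exp(-|x|²/(2t))`. -/
noncomputable def heatKernel (d : ℕ) (t : ℝ) (x : EuclideanSpace ℝ (Fin d)) : ℝ :=
  (2 * π * t) ^ (-(d : ℝ) / 2) * Real.exp (-‖x‖ ^ 2 / (2 * t))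

/-- The mollified Riesz kernel `R^ρ = G_{2ρ} * |·|^{-2}`. -/
noncomputable def rieszMol (d : ℕ) (ρ : ℝ) (x : EuclideanSpace ℝ (Fin d)) : ℝ :=
  ∫ y : EuclideanSpace ℝ (Fin d), heatKernel d (2 * ρ) (x - y) * ‖y‖ ^ (-2 : ℝ)

/-!
Fubini and the semigroup identity `∫ G_t(y) G_s(y - z) dy = G_{t+s}(z)` (completing the square)
reduce `(G_t * R^ρ)(0)` to `∫ G_σ(z) |z|⁻² dz` with `σ = t + 2ρ`. In polar coordinates this and
`∫ G_σ = 1` become Gamma integrals `∫ r^{d-3} e^{-r²/2σ} dr` and `∫ r^{d-1} e^{-r²/2σ} dr`, whose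
ratio `Γ(d/2 - 1) / Γ(d/2)` gives `1/((d-2)σ)`. The `ν`-integral is elementary:
`(ν/(σ+ν))^{d/2-1}` is an antiderivative of `(d/2-1) σ ν^{d/2-2} (σ+ν)^{-d/2}`.
All integrands are nonnegative with an explicitly computed nonzero integral, which already makes
them integrable (a non-integrable function has Bochner integral `0`).
-/

open Set Filter Topology Module

theorem integral_exp_neg_mul_sq_norm_sub_mul_sq_norm_sub {V : Type*} [NormedAddCommGroup V]
    [InnerProductSpace ℝ V] [FiniteDimensional ℝ V] [MeasurableSpace V] [BorelSpace V]
    {a b : ℝ} (ha : 0 < a) (hb : 0 < b) (z : V) :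
    ∫ y : V, rexp (-a * ‖y‖ ^ 2 - b * ‖y - z‖ ^ 2)
      = (π / (a + b)) ^ (finrank ℝ V / 2 : ℝ) * rexp (-(a * b / (a + b)) * ‖z‖ ^ 2) := by
  have hab : 0 < a + b := by positivity
  have h_square (y : V) : -a * ‖y‖ ^ 2 - b * ‖y - z‖ ^ 2
      = -(a + b) * ‖y - (b / (a + b)) • z‖ ^ 2 + -(a * b / (a + b)) * ‖z‖ ^ 2 := by
    rw [norm_sub_sq_real, norm_sub_sq_real, real_inner_smul_right, norm_smul, mul_pow,
      Real.norm_of_nonneg (by positivity)]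
    field_simp
    ring
  simp_rw [h_square, Real.exp_add, integral_mul_const,
    integral_sub_right_eq_self (fun y : V => rexp (-(a + b) * ‖y‖ ^ 2)),
    GaussianFourier.integral_rexp_neg_mul_sq_norm hab]

theorem integral_norm_rpow_neg_two_mul_exp_neg_mul_sq {E : Type*} [NormedAddCommGroup E]
    [NormedSpace ℝ E] [FiniteDimensional ℝ E] [MeasurableSpace E] [BorelSpace E]
    (μ : Measure E) [μ.IsAddHaarMeasure] (hE : 2 < finrank ℝ E) {a : ℝ} (ha : 0 < a) :
    ∫ x, ‖x‖ ^ (-2 : ℝ) * rexp (-a * ‖x‖ ^ 2) ∂μ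
      = 2 * a / (finrank ℝ E - 2) * ∫ x, rexp (-a * ‖x‖ ^ 2) ∂μ := by
  have : Nontrivial E := Module.nontrivial_of_finrank_pos (R := ℝ) (by omega)
  set n : ℕ := finrank ℝ E
  have hn : (2 : ℝ) < n := by exact_mod_cast hE
  have h_radial (g : ℝ → ℝ) : ∫ x, g ‖x‖ ∂μ
      = n * μ.real (Metric.ball 0 1) * ∫ r in Ioi (0 : ℝ), r ^ ((n : ℝ) - 1) * g r := by
    rw [integral_fun_norm_addHaar μ g, nsmul_eq_mul, smul_eq_mul, mul_assoc]
    congr 2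
    refine setIntegral_congr_fun measurableSet_Ioi fun r _ => ?_
    rw [smul_eq_mul, ← Real.rpow_natCast, Nat.cast_sub (by omega), Nat.cast_one]
  have h_shift : ∀ r ∈ Ioi (0 : ℝ), r ^ ((n : ℝ) - 1) * (r ^ (-2 : ℝ) * rexp (-a * r ^ 2))
      = r ^ ((n : ℝ) - 3) * rexp (-a * r ^ (2 : ℝ)) := fun r hr => by
    rw [← mul_assoc, ← Real.rpow_add hr, Real.rpow_two]
    ring_nf
  rw [h_radial (fun r => r ^ (-2 : ℝ) * rexp (-a * r ^ 2)),
    h_radial (fun r => rexp (-a * r ^ 2)), setIntegral_congr_fun measurableSet_Ioi h_shift]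
  simp_rw [← Real.rpow_two]
  rw [integral_rpow_mul_exp_neg_mul_rpow two_pos (by linarith) ha,
    integral_rpow_mul_exp_neg_mul_rpow two_pos (by linarith) ha]
  have h_gamma :
      Gamma (((n : ℝ) - 1 + 1) / 2) = ((n - 2) / 2) * Gamma (((n : ℝ) - 3 + 1) / 2) := by
    rw [show ((n : ℝ) - 1 + 1) / 2 = ((n : ℝ) - 3 + 1) / 2 + 1 by ring,
      Real.Gamma_add_one (by linarith)]
    ring
  have h_pow : a ^ (-((n : ℝ) - 3 + 1) / 2) = a * a ^ (-((n : ℝ) - 1 + 1) / 2) := by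
    rw [← Real.rpow_one_add' ha.le (by linarith)]
    ring_nf
  have : (n : ℝ) - 2 ≠ 0 := by linarith
  rw [h_gamma, h_pow]
  field_simp

theorem integral_rpow_sub_two_mul_add_rpow_neg {p σ : ℝ} (hp : 1 < p) (hσ : 0 < σ) :
    ∫ ν in Ioi (0 : ℝ), ν ^ (p - 2) * (σ + ν) ^ (-p) = 1 / ((p - 1) * σ) := by
  set F : ℝ → ℝ := fun ν => (ν / (σ + ν)) ^ (p - 1) / ((p - 1) * σ)
  have hp1 : 0 < p - 1 := by linarith
  have h_ratio_cont : ContinuousAt (fun ν : ℝ => ν / (σ + ν)) 0 :=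
    continuousAt_id.div (continuousAt_const.add continuousAt_id) (by simpa using hσ.ne')
  have h_ratio_lim : Tendsto (fun ν : ℝ => ν / (σ + ν)) atTop (𝓝 1) := by
    have h := tendsto_const_nhds (x := (1 : ℝ)).sub
      (tendsto_const_nhds (x := σ).div_atTop (tendsto_atTop_add_const_left _ σ tendsto_id))
    rw [sub_zero] at h
    refine h.congr' ?_
    filter_upwards [eventually_gt_atTop 0] with ν hν
    simp only [id]
    field_simp
    ring
  have h_deriv (ν : ℝ) (hν : ν ∈ Ioi 0) : HasDerivAt F (ν ^ (p - 2) * (σ + ν) ^ (-p)) ν := by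
    have hν : 0 < ν := hν
    have hσν : 0 < σ + ν := by linarith
    have h := (((hasDerivAt_id ν).div ((hasDerivAt_id ν).const_add σ) hσν.ne').rpow_const
      (p := p - 1) (Or.inl (div_pos hν hσν).ne')).div_const ((p - 1) * σ)
    refine h.congr_deriv ?_
    simp only [id, Pi.div_apply]
    have h_split : (σ + ν) ^ (-p) = ((σ + ν) ^ (p - 2))⁻¹ * ((σ + ν) ^ 2)⁻¹ := by
      rw [Real.rpow_neg hσν.le, ← mul_inv, ← Real.rpow_natCast, ← Real.rpow_add hσν]
      norm_num
    rw [h_split, Real.div_rpow hν.le hσν.le, show p - 1 - 1 = p - 2 by ring]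
    field_simp
    ring
  have h_int := integral_Ioi_of_hasDerivAt_of_nonneg
    ((h_ratio_cont.rpow_const (Or.inr hp1.le)).div_const _).continuousWithinAt h_deriv
    (fun ν (hν : 0 < ν) =>
      mul_nonneg (Real.rpow_nonneg hν.le _) (Real.rpow_nonneg (by linarith) _))
    ((h_ratio_lim.rpow_const (Or.inr hp1.le)).div_const ((p - 1) * σ))
  simpa [F, Real.zero_rpow hp1.ne'] using h_int

section HeatKernel

variable {d : ℕ}

theorem heatKernel_eq_rpow_mul_exp (t : ℝ) (x : EuclideanSpace ℝ (Fin d)) :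
    heatKernel d t x = (2 * π * t) ^ (-(d : ℝ) / 2) * rexp (-(2 * t)⁻¹ * ‖x‖ ^ 2) := by
  rw [heatKernel, neg_mul, ← div_eq_inv_mul, neg_div (2 * t)]

theorem heatKernel_pos {t : ℝ} (ht : 0 < t) (x : EuclideanSpace ℝ (Fin d)) :
    0 < heatKernel d t x := by
  rw [heatKernel]
  positivity

theorem heatKernel_neg (t : ℝ) (x : EuclideanSpace ℝ (Fin d)) :
    heatKernel d t (-x) = heatKernel d t x := by
  rw [heatKernel, heatKernel, norm_neg]

theorem continuous_heatKernel (t : ℝ) : Continuous (heatKernel d t) := by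
  unfold heatKernel
  fun_prop

theorem integral_heatKernel {t : ℝ} (ht : 0 < t) :
    ∫ x : EuclideanSpace ℝ (Fin d), heatKernel d t x = 1 := by
  simp_rw [heatKernel_eq_rpow_mul_exp, integral_const_mul]
  rw [GaussianFourier.integral_rexp_neg_mul_sq_norm (by positivity), finrank_euclideanSpace_fin,
    div_inv_eq_mul, neg_div, Real.rpow_neg (by positivity),
    show π * (2 * t) = 2 * π * t by ring, inv_mul_cancel₀ (by positivity)]

theorem integral_heatKernel_mul_heatKernel_sub {t s : ℝ} (ht : 0 < t) (hs : 0 < s)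
    (z : EuclideanSpace ℝ (Fin d)) :
    ∫ y, heatKernel d t y * heatKernel d s (y - z) = heatKernel d (t + s) z := by
  have h_prod (y : EuclideanSpace ℝ (Fin d)) : heatKernel d t y * heatKernel d s (y - z)
      = (2 * π * t) ^ (-(d : ℝ) / 2) * (2 * π * s) ^ (-(d : ℝ) / 2)
        * rexp (-(2 * t)⁻¹ * ‖y‖ ^ 2 - (2 * s)⁻¹ * ‖y - z‖ ^ 2) := by
    rw [heatKernel_eq_rpow_mul_exp, heatKernel_eq_rpow_mul_exp, mul_mul_mul_comm, ← Real.exp_add]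
    congr 2
    ring
  have h_rate : (2 * t)⁻¹ * (2 * s)⁻¹ / ((2 * t)⁻¹ + (2 * s)⁻¹) = (2 * (t + s))⁻¹ := by
    field_simp
    ring
  have h_const : (2 * π * t) ^ (-(d : ℝ) / 2) * (2 * π * s) ^ (-(d : ℝ) / 2)
      * (π / ((2 * t)⁻¹ + (2 * s)⁻¹)) ^ ((d : ℝ) / 2) = (2 * π * (t + s)) ^ (-(d : ℝ) / 2) := by
    rw [neg_div, Real.rpow_neg (by positivity), Real.rpow_neg (by positivity),
      Real.rpow_neg (by positivity), ← Real.inv_rpow (by positivity),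
      ← Real.inv_rpow (by positivity), ← Real.inv_rpow (by positivity),
      ← Real.mul_rpow (by positivity) (by positivity),
      ← Real.mul_rpow (by positivity) (by positivity)]
    congr 1
    field_simp
    ring
  simp_rw [h_prod, integral_const_mul]
  rw [integral_exp_neg_mul_sq_norm_sub_mul_sq_norm_sub (by positivity) (by positivity),
    finrank_euclideanSpace_fin, h_rate, ← mul_assoc, h_const, heatKernel_eq_rpow_mul_exp]

theorem integrable_heatKernel_mul_heatKernel_sub {t s : ℝ} (ht : 0 < t) (hs : 0 < s)
    (z : EuclideanSpace ℝ (Fin d)) :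
    Integrable fun y => heatKernel d t y * heatKernel d s (y - z) :=
  .of_integral_ne_zero <| by
    rw [integral_heatKernel_mul_heatKernel_sub ht hs]
    exact (heatKernel_pos (by positivity) z).ne'

theorem integral_heatKernel_mul_norm_rpow_neg_two (hd : 3 ≤ d) {σ : ℝ} (hσ : 0 < σ) :
    ∫ z : EuclideanSpace ℝ (Fin d), heatKernel d σ z * ‖z‖ ^ (-2 : ℝ) = 1 / ((d - 2) * σ) := by
  have hd' : (2 : ℝ) < d := by exact_mod_cast hd
  have h_radial := integral_norm_rpow_neg_two_mul_exp_neg_mul_sq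
    (volume : Measure (EuclideanSpace ℝ (Fin d))) (by rw [finrank_euclideanSpace_fin]; omega)
    (inv_pos.2 (by positivity : 0 < 2 * σ))
  have h_total := integral_heatKernel (d := d) hσ
  rw [integral_congr_ae (.of_forall (heatKernel_eq_rpow_mul_exp σ)), integral_const_mul] at h_total
  have h_split (z : EuclideanSpace ℝ (Fin d)) : heatKernel d σ z * ‖z‖ ^ (-2 : ℝ)
      = (2 * π * σ) ^ (-(d : ℝ) / 2) * (‖z‖ ^ (-2 : ℝ) * rexp (-(2 * σ)⁻¹ * ‖z‖ ^ 2)) := by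
    rw [heatKernel_eq_rpow_mul_exp]
    ring
  rw [integral_congr_ae (.of_forall h_split), integral_const_mul, h_radial,
    finrank_euclideanSpace_fin, mul_left_comm, h_total]
  have : (d : ℝ) - 2 ≠ 0 := by linarith
  field_simp

theorem integrable_heatKernel_mul_norm_rpow_neg_two (hd : 3 ≤ d) {σ : ℝ} (hσ : 0 < σ) :
    Integrable fun z : EuclideanSpace ℝ (Fin d) => heatKernel d σ z * ‖z‖ ^ (-2 : ℝ) :=
  .of_integral_ne_zero <| by
    rw [integral_heatKernel_mul_norm_rpow_neg_two hd hσ]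
    have hd' : (2 : ℝ) < d := by exact_mod_cast hd
    exact (one_div_pos.2 (mul_pos (by linarith) hσ)).ne'

theorem integral_heatKernel_mul_integral_heatKernel_sub_mul {t s : ℝ} (ht : 0 < t) (hs : 0 < s)
    {f : EuclideanSpace ℝ (Fin d) → ℝ} (hf : AEStronglyMeasurable f)
    (hf_int : Integrable fun z => heatKernel d (t + s) z * f z) :
    ∫ y, heatKernel d t y * ∫ z, heatKernel d s (y - z) * f z
      = ∫ z, heatKernel d (t + s) z * f z := by
  have h_int : Integrable (Function.uncurry fun y z : EuclideanSpace ℝ (Fin d) =>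
      heatKernel d t y * (heatKernel d s (y - z) * f z)) (volume.prod volume) := by
    refine (integrable_prod_iff' ?_).2 ⟨.of_forall fun z => ?_, ?_⟩
    · exact ((continuous_heatKernel t).comp continuous_fst).aestronglyMeasurable.mul
        (((continuous_heatKernel s).comp (continuous_fst.sub continuous_snd)
          ).aestronglyMeasurable.mul hf.comp_snd)
    · simpa only [Function.uncurry_apply_pair, ← mul_assoc]
        using (integrable_heatKernel_mul_heatKernel_sub ht hs z).mul_const (f z)
    · refine hf_int.norm.congr (.of_forall fun z => ?_)
      simp_rw [Function.uncurry_apply_pair, norm_mul, ← mul_assoc, integral_mul_const,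
        Real.norm_of_nonneg (heatKernel_pos ht _).le, Real.norm_of_nonneg (heatKernel_pos hs _).le,
        integral_heatKernel_mul_heatKernel_sub ht hs,
        Real.norm_of_nonneg (heatKernel_pos (add_pos ht hs) _).le]
  calc ∫ y, heatKernel d t y * ∫ z, heatKernel d s (y - z) * f z
      = ∫ y, ∫ z, heatKernel d t y * (heatKernel d s (y - z) * f z) := by
        simp_rw [integral_const_mul]
    _ = ∫ z, ∫ y, heatKernel d t y * (heatKernel d s (y - z) * f z) :=
        integral_integral_swap h_int
    _ = ∫ z, heatKernel d (t + s) z * f z := by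
        simp_rw [← mul_assoc, integral_mul_const, integral_heatKernel_mul_heatKernel_sub ht hs]

end HeatKernel

/-- For `d ≥ 3`, `t > 0`, `ρ > 0`:
`(G_t * R^ρ)(0) = (1/2)∫_0^∞ ν^{d/2-2}(t+ν+2ρ)^{-d/2} dν = 1/((d-2)(t+2ρ))`. -/
theorem heat_conv_rieszMol_at_zero (d : ℕ) (hd : 3 ≤ d) (t ρ : ℝ) (ht : 0 < t) (hρ : 0 < ρ) :
    (∫ y : EuclideanSpace ℝ (Fin d), heatKernel d t (0 - y) * rieszMol d ρ y) =
        (1 / 2) * ∫ ν in Set.Ioi (0 : ℝ),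
          ν ^ ((d : ℝ) / 2 - 2) * (t + ν + 2 * ρ) ^ (-(d : ℝ) / 2) ∧
    (∫ y : EuclideanSpace ℝ (Fin d), heatKernel d t (0 - y) * rieszMol d ρ y) =
        1 / (((d : ℝ) - 2) * (t + 2 * ρ)) := by
  have hσ : 0 < t + 2 * ρ := by positivity
  have hd' : (2 : ℝ) < d := by exact_mod_cast hd
  have h_conv : ∫ y : EuclideanSpace ℝ (Fin d), heatKernel d t (0 - y) * rieszMol d ρ y
      = 1 / (((d : ℝ) - 2) * (t + 2 * ρ)) := by
    simp_rw [zero_sub, heatKernel_neg, rieszMol]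
    rw [integral_heatKernel_mul_integral_heatKernel_sub_mul ht (by positivity)
      (measurable_norm.pow_const _).aestronglyMeasurable
      (integrable_heatKernel_mul_norm_rpow_neg_two hd hσ),
      integral_heatKernel_mul_norm_rpow_neg_two hd hσ]
  refine ⟨?_, h_conv⟩
  have h_shift : ∀ ν ∈ Ioi (0 : ℝ), ν ^ ((d : ℝ) / 2 - 2) * (t + ν + 2 * ρ) ^ (-(d : ℝ) / 2)
      = ν ^ ((d : ℝ) / 2 - 2) * ((t + 2 * ρ) + ν) ^ (-((d : ℝ) / 2)) := fun ν _ => by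
    rw [add_right_comm, neg_div]
  rw [h_conv, setIntegral_congr_fun measurableSet_Ioi h_shift,
    integral_rpow_sub_two_mul_add_rpow_neg (by linarith) hσ]
  field_simp
end

section
/- For all t > 0 and ρ > 0, ∫_0^t ds / ( 2(s/t)(t−s) + 2ρ ) = ( t/√(t(t+4ρ)) ) · log( (t + √(t(t+4ρ)) + 2ρ) / (2ρ) ), and this quantity is at most log( (3t + 2ρ) / (2ρ) ). -/
open MeasureTheory Real

/-!
With `D = √(t (t + 4ρ))`, the denominator factors as `(2 / t) (s - a) (b - s)` with
`a, b = (t ∓ D) / 2`, so partial fractions give `(t / D) log (b / -a)`, and `b / -a` simplifies to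
`(t + D + 2ρ) / (2ρ)`. For the bound, `α = t / D ≤ 1` and Bernoulli's inequality
`(1 + x) ^ α ≤ 1 + α x` give `α log (1 + x) ≤ log (1 + α x)`, while `α (t + D) ≤ 2t`.
-/

theorem hasDerivAt_log_sub_sub_log_sub {a b x : ℝ} (hax : a < x) (hxb : x < b) :
    HasDerivAt (fun s => log (s - a) - log (b - s)) ((b - a) * ((x - a) * (b - x))⁻¹) x := by
  have hl := ((hasDerivAt_id' x).sub_const a).log (sub_pos.2 hax).ne'
  have hr := ((hasDerivAt_id' x).const_sub b).log (sub_pos.2 hxb).ne'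
  refine (hl.sub hr).congr_deriv ?_
  field_simp [(sub_pos.2 hax).ne', (sub_pos.2 hxb).ne']
  ring

theorem integral_inv_mul_sub_mul_sub {a b u v : ℝ} (hau : a < u) (huv : u ≤ v) (hvb : v < b) :
    ∫ s in u..v, ((s - a) * (b - s))⁻¹ =
      (log (v - a) - log (b - v) - (log (u - a) - log (b - u))) / (b - a) := by
  have hmem : ∀ x ∈ Set.uIcc u v, a < x ∧ x < b := fun x hx => by
    rw [Set.uIcc_of_le huv] at hx
    exact ⟨hau.trans_le hx.1, hx.2.trans_lt hvb⟩
  have hderiv : ∀ x ∈ Set.uIcc u v, HasDerivAt (fun s => (log (s - a) - log (b - s)) / (b - a))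
      ((x - a) * (b - x))⁻¹ x := fun x hx =>
    ((hasDerivAt_log_sub_sub_log_sub (hmem x hx).1 (hmem x hx).2).div_const (b - a)).congr_deriv
      (mul_div_cancel_left₀ _ (sub_pos.2 ((hmem x hx).1.trans (hmem x hx).2)).ne')
  have hcont : ContinuousOn (fun s : ℝ => ((s - a) * (b - s))⁻¹) (Set.uIcc u v) :=
    (continuousOn_id.sub continuousOn_const |>.mul (continuousOn_const.sub continuousOn_id)).inv₀
      fun x hx => mul_ne_zero (sub_pos.2 (hmem x hx).1).ne' (sub_pos.2 (hmem x hx).2).ne'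
  rw [intervalIntegral.integral_eq_sub_of_hasDerivAt hderiv hcont.intervalIntegrable]
  ring

theorem mul_log_one_add_le_log_one_add_mul {α x : ℝ} (hα₀ : 0 ≤ α) (hα₁ : α ≤ 1) (hx : -1 < x) :
    α * log (1 + x) ≤ log (1 + α * x) := by
  rw [← log_rpow (by linarith)]
  exact log_le_log (rpow_pos_of_pos (by linarith) _) (rpow_one_add_le_one_add_mul_self hx.le hα₀ hα₁)

theorem lt_sqrt_mul_add_four_mul {t ρ : ℝ} (ht : 0 < t) (hρ : 0 < ρ) : t < √(t * (t + 4 * ρ)) :=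
  lt_sqrt_of_sq_lt (by nlinarith)

theorem integral_inv_two_mul_div_mul_sub_add {t ρ : ℝ} (ht : 0 < t) (hρ : 0 < ρ) :
    ∫ s in (0 : ℝ)..t, (2 * (s / t) * (t - s) + 2 * ρ)⁻¹ =
      t / √(t * (t + 4 * ρ)) * log ((t + √(t * (t + 4 * ρ)) + 2 * ρ) / (2 * ρ)) := by
  set D := √(t * (t + 4 * ρ))
  have hD2 : D ^ 2 = t * (t + 4 * ρ) := sq_sqrt (by positivity)
  have htD : t < D := lt_sqrt_mul_add_four_mul ht hρ
  -- `(t ∓ D) / 2` are the roots of `2 (s / t) (t - s) + 2ρ`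
  have hfactor : (fun s => (2 * (s / t) * (t - s) + 2 * ρ)⁻¹) =
      fun s => t / 2 * ((s - (t - D) / 2) * ((t + D) / 2 - s))⁻¹ := by
    ext s
    rw [← inv_div, ← inv_inv (t / 2), ← mul_inv]
    congr 1
    field_simp
    linear_combination -hD2
  have hlog : log ((t + D) / 2) - log ((D - t) / 2) = log ((t + D + 2 * ρ) / (2 * ρ)) := by
    rw [← log_div (by linarith) (by linarith)]
    congr 1
    rw [div_eq_div_iff (by linarith) (by positivity)]
    linear_combination -hD2 / 2
  rw [hfactor, intervalIntegral.integral_const_mul,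
    integral_inv_mul_sub_mul_sub (by linarith) ht.le (by linarith), ← hlog]
  field_simp
  ring_nf

theorem div_sqrt_mul_log_le_log_three_mul_add {t ρ : ℝ} (ht : 0 < t) (hρ : 0 < ρ) :
    t / √(t * (t + 4 * ρ)) * log ((t + √(t * (t + 4 * ρ)) + 2 * ρ) / (2 * ρ)) ≤
      log ((3 * t + 2 * ρ) / (2 * ρ)) := by
  set D := √(t * (t + 4 * ρ))
  have htD : t < D := lt_sqrt_mul_add_four_mul ht hρ
  have hD : 0 < D := ht.trans htD
  have hshift : ∀ x, (x + 2 * ρ) / (2 * ρ) = 1 + x / (2 * ρ) := fun x => by field_simp; ring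
  rw [hshift, hshift]
  calc t / D * log (1 + (t + D) / (2 * ρ))
      ≤ log (1 + t / D * ((t + D) / (2 * ρ))) :=
        mul_log_one_add_le_log_one_add_mul (by positivity) ((div_le_one hD).2 htD.le)
          (neg_one_lt_zero.trans (by positivity))
    _ ≤ log (1 + 3 * t / (2 * ρ)) := by
        rw [← mul_div_assoc]
        gcongr log (1 + ?_ / _)
        rw [div_mul_eq_mul_div, div_le_iff₀ hD]
        nlinarith

/-- For `t > 0` and `ρ > 0`:
`∫_0^t ds/(2(s/t)(t-s) + 2ρ) = (t/√(t(t+4ρ))) log((t + √(t(t+4ρ)) + 2ρ)/(2ρ))`,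
and this quantity is at most `log((3t+2ρ)/(2ρ))`. -/
theorem integral_inverse_parabola (t ρ : ℝ) (ht : 0 < t) (hρ : 0 < ρ) :
    (∫ s in Set.Ioc (0 : ℝ) t, (2 * (s / t) * (t - s) + 2 * ρ)⁻¹) =
        (t / Real.sqrt (t * (t + 4 * ρ))) *
          Real.log ((t + Real.sqrt (t * (t + 4 * ρ)) + 2 * ρ) / (2 * ρ)) ∧
      (t / Real.sqrt (t * (t + 4 * ρ))) *
          Real.log ((t + Real.sqrt (t * (t + 4 * ρ)) + 2 * ρ) / (2 * ρ)) ≤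
        Real.log ((3 * t + 2 * ρ) / (2 * ρ)) := by
  rw [← intervalIntegral.integral_of_le ht.le]
  exact ⟨integral_inv_two_mul_div_mul_sub_add ht hρ, div_sqrt_mul_log_le_log_three_mul_add ht hρ⟩
end

section
/- Let d ≥ 3 be an integer and α ∈ ℝ. Define ṽ_t(x) = t^α |x|^{−α} G_{2t}(x) for t > 0 and x ∈ ℝ^d \ {0}. Then ṽ satisfies the pointwise partial differential equation ∂_t ṽ_t(x) = Δ ṽ_t(x) + ( α(d − 2 − α) / |x|² ) ṽ_t(x) on (0,∞) × (ℝ^d \ {0}), where Δ denotes the spatial Laplacian. -/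
/-!
In the variable `s = ‖y‖²` one has `ṽ_t(y) = P(t, s)` with
`P(t, s) = (4π)^{-d/2} t^{α-d/2} s^{-α/2} e^{-s/(4t)}`. For a function `y ↦ f(‖y‖²)` the Laplacian
is `2d f'(s) + 4s f''(s)`, and `∂_t P`, `∂_s P`, `∂_s² P` are `P` times explicit rational functions
of `t` and `s`, so the equation reduces to a rational identity in `t`, `s`, `α`, `d`.
-/

open Real

/-- The Laplacian of `f : ℝ^d → ℝ` at `x`, as the trace of the second derivative in the
standard orthonormal coordinate directions. -/
noncomputable def laplacian (d : ℕ) (f : EuclideanSpace ℝ (Fin d) → ℝ)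
    (x : EuclideanSpace ℝ (Fin d)) : ℝ :=
  ∑ i : Fin d, iteratedFDeriv ℝ 2 f x ![EuclideanSpace.single i 1, EuclideanSpace.single i 1]

open Filter Topology

section RadialSecondDerivative

variable {E : Type*} [NormedAddCommGroup E] [InnerProductSpace ℝ E]
  {f f' : ℝ → ℝ} {f'' : ℝ} {x : E}

theorem HasDerivAt.hasFDerivAt_comp_norm_sq {y : E} {a : ℝ} (hf : HasDerivAt f a (‖y‖ ^ 2)) :
    HasFDerivAt (fun z : E => f (‖z‖ ^ 2)) (a • 2 • innerSL ℝ y) y :=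
  hf.comp_hasFDerivAt y (hasStrictFDerivAt_norm_sq y).hasFDerivAt

theorem iteratedFDeriv_two_comp_norm_sq_apply
    (hf : ∀ᶠ s in 𝓝 (‖x‖ ^ 2), HasDerivAt f (f' s) s) (hf' : HasDerivAt f' f'' (‖x‖ ^ 2))
    (v w : E) :
    iteratedFDeriv ℝ 2 (fun y : E => f (‖y‖ ^ 2)) x ![v, w] =
      2 * f' (‖x‖ ^ 2) * inner ℝ v w + 4 * f'' * inner ℝ x v * inner ℝ x w := by
  have hfderiv : fderiv ℝ (fun y : E => f (‖y‖ ^ 2)) =ᶠ[𝓝 x]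
      fun y => f' (‖y‖ ^ 2) • (2 • innerSL ℝ : E →L[ℝ] E →L[ℝ] ℝ) y := by
    have hcont : ContinuousAt (fun y : E => ‖y‖ ^ 2) x := by fun_prop
    filter_upwards [hcont.eventually hf] with y hy
    exact hy.hasFDerivAt_comp_norm_sq.fderiv
  have hsecond := (hf'.hasFDerivAt_comp_norm_sq.smul
    (2 • innerSL ℝ : E →L[ℝ] E →L[ℝ] ℝ).hasFDerivAt).congr_of_eventuallyEq hfderiv
  rw [iteratedFDeriv_two_apply, hsecond.fderiv]
  simp only [Matrix.cons_val_zero, Matrix.cons_val_one, Matrix.cons_val_fin_one,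
    add_apply, smul_apply,
    ContinuousLinearMap.smulRight_apply, coe_innerSL_apply, nsmul_eq_mul, smul_eq_mul]
  rw [innerSL_apply_apply, innerSL_apply_apply]
  ring

end RadialSecondDerivative

theorem laplacian_comp_norm_sq {d : ℕ} {f f' : ℝ → ℝ} {f'' : ℝ} {x : EuclideanSpace ℝ (Fin d)}
    (hf : ∀ᶠ s in 𝓝 (‖x‖ ^ 2), HasDerivAt f (f' s) s) (hf' : HasDerivAt f' f'' (‖x‖ ^ 2)) :
    laplacian d (fun y => f (‖y‖ ^ 2)) x = 2 * d * f' (‖x‖ ^ 2) + 4 * ‖x‖ ^ 2 * f'' := by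
  have hcoord (i : Fin d) : iteratedFDeriv ℝ 2 (fun y => f (‖y‖ ^ 2)) x
      ![EuclideanSpace.single i 1, EuclideanSpace.single i 1] =
      2 * f' (‖x‖ ^ 2) + 4 * f'' * x i ^ 2 := by
    simp only [iteratedFDeriv_two_comp_norm_sq_apply hf hf', EuclideanSpace.inner_single_right,
      PiLp.single_eq_same, conj_trivial]
    ring
  simp only [laplacian, hcoord, Finset.sum_add_distrib, Finset.sum_const, Finset.card_univ,
    Fintype.card_fin, nsmul_eq_mul, ← Finset.mul_sum, ← EuclideanSpace.real_norm_sq_eq]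
  ring

theorem hasDerivAt_rpow_const_of_pos (p : ℝ) {u : ℝ} (hu : 0 < u) :
    HasDerivAt (fun u => u ^ p) (p / u * u ^ p) u := by
  convert hasDerivAt_rpow_const (p := p) (Or.inl hu.ne') using 1
  rw [rpow_sub_one hu.ne']
  ring

noncomputable def tildeVProfile (d : ℕ) (α t s : ℝ) : ℝ :=
  (4 * π) ^ (-(d : ℝ) / 2) * t ^ (α - d / 2) * s ^ (-α / 2) * exp (-s / (4 * t))

noncomputable def tildeVProfileDeriv (d : ℕ) (α t s : ℝ) : ℝ :=
  tildeVProfile d α t s * (-(α / 2) * s⁻¹ - (4 * t)⁻¹)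

section TildeVProfile

variable {d : ℕ} {α t s : ℝ}

theorem hasDerivAt_tildeVProfile (hs : 0 < s) :
    HasDerivAt (tildeVProfile d α t) (tildeVProfileDeriv d α t s) s := by
  have hexp : HasDerivAt (fun u => exp (-u / (4 * t))) (exp (-s / (4 * t)) * (-1 / (4 * t))) s :=
    ((hasDerivAt_neg' s).div_const (4 * t)).exp
  have h := ((hasDerivAt_rpow_const_of_pos (-α / 2) hs).mul hexp).const_mul
    ((4 * π) ^ (-(d : ℝ) / 2) * t ^ (α - d / 2))
  refine (h.congr_of_eventuallyEq (.of_forall fun u => ?_)).congr_deriv ?_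
  · simp only [tildeVProfile, Pi.mul_apply]
    ring
  · simp only [tildeVProfileDeriv, tildeVProfile]
    ring

theorem hasDerivAt_tildeVProfileDeriv (hs : 0 < s) :
    HasDerivAt (tildeVProfileDeriv d α t)
      (tildeVProfile d α t s * ((α / 2 * s⁻¹ + (4 * t)⁻¹) ^ 2 + α / 2 * s⁻¹ ^ 2)) s := by
  have h := (hasDerivAt_tildeVProfile (d := d) (α := α) (t := t) hs).mul
    (((hasDerivAt_inv hs.ne').const_mul (-(α / 2))).sub_const (4 * t)⁻¹)
  refine h.congr_deriv ?_
  simp only [tildeVProfileDeriv]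
  ring

theorem hasDerivAt_tildeVProfile_time (ht : 0 < t) :
    HasDerivAt (fun τ => tildeVProfile d α τ s)
      (tildeVProfile d α t s * ((α - d / 2) / t + s / (4 * t ^ 2))) t := by
  have hexp : HasDerivAt (fun τ => exp (-s / (4 * τ)))
      (exp (-s / (4 * t)) * (s / (4 * t ^ 2))) t := by
    refine (((hasDerivAt_const t (-s)).fun_div ((hasDerivAt_id' t).const_mul 4)
      (by positivity)).exp).congr_deriv ?_
    field_simp
    ring
  have h := (((hasDerivAt_rpow_const_of_pos (α - d / 2) ht).const_mul
    ((4 * π) ^ (-(d : ℝ) / 2))).mul_const (s ^ (-α / 2))).mul hexp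
  refine (h.congr_of_eventuallyEq (.of_forall fun u => ?_)).congr_deriv ?_
  · simp only [tildeVProfile, Pi.mul_apply]
  · simp only [tildeVProfile]
    ring

theorem tildeVProfile_radial_pde (ht : 0 < t) (hs : 0 < s) :
    tildeVProfile d α t s * ((α - d / 2) / t + s / (4 * t ^ 2)) =
      2 * d * tildeVProfileDeriv d α t s +
        4 * s * (tildeVProfile d α t s * ((α / 2 * s⁻¹ + (4 * t)⁻¹) ^ 2 + α / 2 * s⁻¹ ^ 2)) +
        α * ((d : ℝ) - 2 - α) / s * tildeVProfile d α t s := by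
  simp only [tildeVProfileDeriv]
  field_simp
  ring

theorem rpow_mul_norm_rpow_mul_heatKernel (ht : 0 < t) (y : EuclideanSpace ℝ (Fin d)) :
    t ^ α * ‖y‖ ^ (-α) * heatKernel d (2 * t) y = tildeVProfile d α t (‖y‖ ^ 2) := by
  have htime : t ^ (α - d / 2) = t ^ α * t ^ (-(d : ℝ) / 2) := by
    rw [← rpow_add ht]
    ring_nf
  have hspace : (‖y‖ ^ 2) ^ (-α / 2) = ‖y‖ ^ (-α) := by
    rw [← rpow_natCast, ← rpow_mul (norm_nonneg y)]
    ring_nf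
  rw [tildeVProfile, heatKernel, htime, hspace, show 2 * π * (2 * t) = 4 * π * t by ring,
    mul_rpow (by positivity) ht.le, show 2 * (2 * t) = 4 * t by ring]
  ring

end TildeVProfile

theorem tilde_v_pde_general (d : ℕ) (α : ℝ) (t : ℝ) (ht : 0 < t)
    (x : EuclideanSpace ℝ (Fin d)) (hx : x ≠ 0) :
    deriv (fun τ : ℝ => τ ^ α * ‖x‖ ^ (-α) * heatKernel d (2 * τ) x) t =
      laplacian d (fun y : EuclideanSpace ℝ (Fin d) =>
          t ^ α * ‖y‖ ^ (-α) * heatKernel d (2 * t) y) x +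
        (α * ((d : ℝ) - 2 - α) / ‖x‖ ^ 2) * (t ^ α * ‖x‖ ^ (-α) * heatKernel d (2 * t) x) := by
  have hs : 0 < ‖x‖ ^ 2 := by positivity
  have htime : deriv (fun τ : ℝ => τ ^ α * ‖x‖ ^ (-α) * heatKernel d (2 * τ) x) t =
      tildeVProfile d α t (‖x‖ ^ 2) * ((α - d / 2) / t + ‖x‖ ^ 2 / (4 * t ^ 2)) := by
    refine ((hasDerivAt_tildeVProfile_time ht).congr_of_eventuallyEq ?_).deriv
    filter_upwards [lt_mem_nhds ht] with τ hτ
    exact rpow_mul_norm_rpow_mul_heatKernel hτ x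
  have hspace := laplacian_comp_norm_sq (f := tildeVProfile d α t)
    (eventually_of_mem (lt_mem_nhds hs) fun _ hs => hasDerivAt_tildeVProfile hs)
    (hasDerivAt_tildeVProfileDeriv hs)
  simp only [rpow_mul_norm_rpow_mul_heatKernel ht, htime, hspace]
  exact tildeVProfile_radial_pde ht hs

/-- For `d ≥ 3`, `α ∈ ℝ`, the function `ṽ_t(x) = t^α |x|^{-α} G_{2t}(x)` satisfies
`∂_t ṽ_t(x) = Δṽ_t(x) + (α(d-2-α)/|x|²) ṽ_t(x)` on `(0,∞) × (ℝ^d \ {0})`. -/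
theorem tilde_v_pde (d : ℕ) (hd : 3 ≤ d) (α : ℝ) (t : ℝ) (ht : 0 < t)
    (x : EuclideanSpace ℝ (Fin d)) (hx : x ≠ 0) :
    deriv (fun τ : ℝ => τ ^ α * ‖x‖ ^ (-α) * heatKernel d (2 * τ) x) t =
      laplacian d (fun y : EuclideanSpace ℝ (Fin d) =>
          t ^ α * ‖y‖ ^ (-α) * heatKernel d (2 * t) y) x +
        (α * ((d : ℝ) - 2 - α) / ‖x‖ ^ 2) * (t ^ α * ‖x‖ ^ (-α) * heatKernel d (2 * t) x) :=
  tilde_v_pde_general d α t ht x hx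
end
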